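/- Let S be the kn×kn quaternionic matrix whose block form has identity blocks Iₙ in positions making it the 'top part' of the squared companion matrix (rows of shifted identities, with one zero block row, and bottom block row (−A₀, −A₁, …, −A_{k−2})). Then ‖S‖₂² ≤ (1/2)[1 + ξ₀ + √((1 + ξ₀)² − 4(‖A₀‖₂² + ‖A₁‖₂²))], where ξ₀ = Σ_{i=0}^{k−2} ‖Aᵢ‖₂². -/

import Mathlib

/-!
Split `x` into blocks `x₀, …, x_{k-2}` and put `σ² = ‖x₀‖² + ‖x₁‖²`, `τ² = ∑_{j ≥ 2} ‖xⱼ‖²`.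
`S` moves `x₂, x₃, …` up two block rows and puts `-∑ Aⱼ xⱼ` in the last one, so
`‖S x‖² = τ² + ‖∑ Aⱼ xⱼ‖²`. Cauchy–Schwarz on the two groups of blocks gives
`‖∑ Aⱼ xⱼ‖ ≤ u σ + v τ` with `u² = ‖A₀‖² + ‖A₁‖²` and `v² = ∑_{j ≥ 2} ‖Aⱼ‖²`. Hence `‖S x‖²` is at
most the quadratic form of `[[u², u v], [u v, 1 + v²]]` at `(σ, τ)`, and this matrix has trace
`1 + ξ₀` and determinant `u²`, so its larger eigenvalue is the claimed bound.
-/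

open scoped Matrix Quaternion BigOperators

noncomputable section

/-- Euclidean norm of a vector with entries in a normed ring (e.g. the quaternions). -/
def qVecNorm {R : Type*} [NormedRing R] {n : Type*} [Fintype n] (x : n → R) : ℝ :=
  Real.sqrt (∑ i, ‖x i‖ ^ 2)

/-- Operator 2-norm (spectral norm) of a matrix over a normed ring. -/
def qSpecNorm {R : Type*} [NormedRing R] {m n : Type*} [Fintype m] [Fintype n]
    (A : Matrix m n R) : ℝ :=
  sSup {c : ℝ | ∃ x : n → R, x ≠ 0 ∧ c = qVecNorm (A.mulVec x) / qVecNorm x}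

/-- `μ` is a right eigenvalue of the quaternionic matrix `A`. -/
def RightEig {n : Type*} [Fintype n] (A : Matrix n n ℍ[ℝ]) (μ : ℍ[ℝ]) : Prop :=
  ∃ x : n → ℍ[ℝ], x ≠ 0 ∧ A.mulVec x = fun i => x i * μ

/-- Right spectral radius of a quaternionic matrix. -/
def rSpecRad {n : Type*} [Fintype n] (A : Matrix n n ℍ[ℝ]) : ℝ :=
  sSup {r : ℝ | ∃ μ : ℍ[ℝ], RightEig A μ ∧ r = ‖μ‖}

/-- Spectral radius of a real 2×2 matrix. -/
def realSpecRad (B : Matrix (Fin 2) (Fin 2) ℝ) : ℝ :=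
  sSup {r : ℝ | ∃ μ ∈ spectrum ℝ B, r = |μ|}

section VecNorm

variable {R : Type*} [NormedRing R] {ι m n : Type*} [Fintype m] [Fintype n]

lemma qVecNorm_nonneg (x : n → R) : 0 ≤ qVecNorm x := Real.sqrt_nonneg _

lemma qVecNorm_sq (x : n → R) : qVecNorm x ^ 2 = ∑ i, ‖x i‖ ^ 2 :=
  Real.sq_sqrt (Finset.sum_nonneg fun _ _ => sq_nonneg _)

lemma qVecNorm_neg (x : n → R) : qVecNorm (-x) = qVecNorm x := by
  simp [qVecNorm]

lemma qVecNorm_pos {x : n → R} (hx : x ≠ 0) : 0 < qVecNorm x := by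
  obtain ⟨i, hi⟩ := Function.ne_iff.mp hx
  exact Real.sqrt_pos.mpr <| Finset.sum_pos' (fun _ _ => sq_nonneg _)
    ⟨i, Finset.mem_univ i, pow_pos (norm_pos_iff.mpr hi) 2⟩

lemma qVecNorm_eq_norm_toLp (x : n → R) : qVecNorm x = ‖WithLp.toLp 2 x‖ := by
  simp [qVecNorm, PiLp.norm_eq_of_L2]

lemma qVecNorm_sum_le (s : Finset ι) (y : ι → n → R) :
    qVecNorm (∑ j ∈ s, y j) ≤ ∑ j ∈ s, qVecNorm (y j) := by
  simpa only [qVecNorm_eq_norm_toLp, WithLp.toLp_sum] using norm_sum_le s _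

lemma qVecNorm_sq_prod [Fintype ι] (x : ι × n → R) :
    qVecNorm x ^ 2 = ∑ j, qVecNorm (fun r => x (j, r)) ^ 2 := by
  simp only [qVecNorm_sq, Fintype.sum_prod_type]

lemma qVecNorm_mulVec_le_frobenius (A : Matrix m n R) (y : n → R) :
    qVecNorm (A *ᵥ y) ≤ Real.sqrt (∑ i, ∑ j, ‖A i j‖ ^ 2) * qVecNorm y := by
  have hrow (i : m) : ‖(A *ᵥ y) i‖ ^ 2 ≤ (∑ j, ‖A i j‖ ^ 2) * ∑ j, ‖y j‖ ^ 2 := by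
    have h : ‖(A *ᵥ y) i‖ ≤ ∑ j, ‖A i j‖ * ‖y j‖ :=
      (norm_sum_le _ _).trans (Finset.sum_le_sum fun j _ => norm_mul_le _ _)
    exact (pow_le_pow_left₀ (norm_nonneg _) h 2).trans (Finset.sum_mul_sq_le_sq_mul_sq _ _ _)
  rw [qVecNorm, qVecNorm, ← Real.sqrt_mul (by positivity), Finset.sum_mul]
  exact Real.sqrt_le_sqrt (Finset.sum_le_sum fun i _ => hrow i)

lemma qSpecNorm_nonneg (A : Matrix m n R) : 0 ≤ qSpecNorm A :=
  Real.sSup_nonneg fun _ ⟨_, _, hc⟩ => hc ▸ div_nonneg (qVecNorm_nonneg _) (qVecNorm_nonneg _)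

lemma qVecNorm_mulVec_le (A : Matrix m n R) (y : n → R) :
    qVecNorm (A *ᵥ y) ≤ qSpecNorm A * qVecNorm y := by
  rcases eq_or_ne y 0 with rfl | hy
  · simp [qVecNorm]
  have hbdd : BddAbove {c : ℝ | ∃ x : n → R, x ≠ 0 ∧ c = qVecNorm (A *ᵥ x) / qVecNorm x} := by
    refine ⟨Real.sqrt (∑ i, ∑ j, ‖A i j‖ ^ 2), ?_⟩
    rintro c ⟨x, hx, rfl⟩
    exact (div_le_iff₀ (qVecNorm_pos hx)).mpr (qVecNorm_mulVec_le_frobenius A x)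
  exact (div_le_iff₀ (qVecNorm_pos hy)).mp (le_csSup hbdd ⟨y, hy, rfl⟩)

lemma qSpecNorm_sq_le_of_forall {A : Matrix m n R} {L : ℝ} (hL : 0 ≤ L)
    (h : ∀ x, qVecNorm (A *ᵥ x) ^ 2 ≤ L * qVecNorm x ^ 2) : qSpecNorm A ^ 2 ≤ L := by
  suffices qSpecNorm A ≤ Real.sqrt L from
    (pow_le_pow_left₀ (qSpecNorm_nonneg A) this 2).trans (Real.sq_sqrt hL).le
  refine Real.sSup_le ?_ (Real.sqrt_nonneg L)
  rintro c ⟨x, hx, rfl⟩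
  rw [div_le_iff₀ (qVecNorm_pos hx), ← Real.sqrt_sq (qVecNorm_nonneg x), ← Real.sqrt_mul hL]
  exact Real.le_sqrt_of_sq_le (h x)

lemma qVecNorm_sum_mulVec_le [Fintype ι] (A : ι → Matrix m n R) (y : ι → n → R) :
    qVecNorm (∑ j, A j *ᵥ y j) ≤ ∑ j, qSpecNorm (A j) * qVecNorm (y j) :=
  (qVecNorm_sum_le _ _).trans (Finset.sum_le_sum fun j _ => qVecNorm_mulVec_le (A j) (y j))

end VecNorm

/-- The larger eigenvalue of a real symmetric 2×2 matrix with trace `1 + ξ` and determinant `α`. -/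
def topEig (ξ α : ℝ) : ℝ := (1 / 2) * (1 + ξ + Real.sqrt ((1 + ξ) ^ 2 - 4 * α))

lemma sq_add_sq_add_le_topEig {u v : ℝ} (hu : 0 ≤ u) (hv : 0 ≤ v) (σ τ : ℝ) :
    τ ^ 2 + (u * σ + v * τ) ^ 2 ≤ topEig (u ^ 2 + v ^ 2) (u ^ 2) * (σ ^ 2 + τ ^ 2) := by
  set d := 1 + v ^ 2 - u ^ 2
  have hdisc : (1 + (u ^ 2 + v ^ 2)) ^ 2 - 4 * u ^ 2 = d ^ 2 + (2 * u * v) ^ 2 := by ring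
  rw [topEig, hdisc]
  set D := Real.sqrt (d ^ 2 + (2 * u * v) ^ 2)
  have hD : D ^ 2 = d ^ 2 + (2 * u * v) ^ 2 := Real.sq_sqrt (by positivity)
  have hdD : |d| ≤ D := Real.abs_le_sqrt (le_add_of_nonneg_right (sq_nonneg _))
  -- `(D + d) / 2` and `(D - d) / 2` are the diagonal entries of `λ - M` for
  -- `M = [[u², u v], [u v, 1 + v²]]` and `λ = topEig …`;
  -- their product is `(u v)²` because `det (λ - M) = 0`.
  have hp : 0 ≤ (D + d) / 2 := by linarith [neg_abs_le d]
  have hq : 0 ≤ (D - d) / 2 := by linarith [le_abs_self d]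
  have hpq : Real.sqrt ((D + d) / 2) * Real.sqrt ((D - d) / 2) = u * v := by
    rw [← Real.sqrt_mul hp, show (D + d) / 2 * ((D - d) / 2) = (u * v) ^ 2 by
      linear_combination hD / 4, Real.sqrt_sq (mul_nonneg hu hv)]
  have amgm := two_mul_le_add_sq (Real.sqrt ((D + d) / 2) * σ) (Real.sqrt ((D - d) / 2) * τ)
  rw [mul_pow, mul_pow, Real.sq_sqrt hp, Real.sq_sqrt hq] at amgm
  linear_combination amgm - 2 * σ * τ * hpq

lemma Fin.sum_univ_succ_succ {M : Type*} [AddCommMonoid M] {m : ℕ} (f : Fin (m + 2) → M) :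
    ∑ j, f j = f 0 + f 1 + ∑ i : Fin m, f i.succ.succ := by
  simp only [Fin.sum_univ_succ, Fin.succ_zero_eq_one, add_assoc]

lemma sum_sq_tail_add_sq_sum_mul_le {m : ℕ} {a s : Fin (m + 2) → ℝ} (ha : ∀ j, 0 ≤ a j)
    (hs : ∀ j, 0 ≤ s j) :
    ∑ i : Fin m, s i.succ.succ ^ 2 + (∑ j, a j * s j) ^ 2 ≤
      topEig (∑ j, a j ^ 2) (a 0 ^ 2 + a 1 ^ 2) * ∑ j, s j ^ 2 := by
  set α := a 0 ^ 2 + a 1 ^ 2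
  set β := ∑ i : Fin m, a i.succ.succ ^ 2
  set σ2 := s 0 ^ 2 + s 1 ^ 2
  set τ2 := ∑ i : Fin m, s i.succ.succ ^ 2
  have hhead : a 0 * s 0 + a 1 * s 1 ≤ √α * √σ2 := by
    simpa [Fin.sum_univ_two] using
      Real.sum_mul_le_sqrt_mul_sqrt Finset.univ ![a 0, a 1] ![s 0, s 1]
  have htail : ∑ i : Fin m, a i.succ.succ * s i.succ.succ ≤ √β * √τ2 :=
    Real.sum_mul_le_sqrt_mul_sqrt _ _ _
  have hcs : ∑ j, a j * s j ≤ √α * √σ2 + √β * √τ2 := by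
    rw [Fin.sum_univ_succ_succ]
    linarith
  have key := sq_add_sq_add_le_topEig (Real.sqrt_nonneg α) (Real.sqrt_nonneg β) √σ2 √τ2
  rw [Real.sq_sqrt (by positivity), Real.sq_sqrt (by positivity), Real.sq_sqrt (by positivity),
    Real.sq_sqrt (by positivity)] at key
  calc τ2 + (∑ j, a j * s j) ^ 2 ≤ τ2 + (√α * √σ2 + √β * √τ2) ^ 2 := by
        gcongr
        exact Finset.sum_nonneg fun j _ => mul_nonneg (ha j) (hs j)
    _ ≤ topEig (α + β) α * (σ2 + τ2) := key
    _ = _ := by rw [Fin.sum_univ_succ_succ, Fin.sum_univ_succ_succ (fun j => s j ^ 2)]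

section Companion

variable {R : Type*} [NormedRing R]

def companionTop (k n : ℕ) (A : ℕ → Matrix (Fin n) (Fin n) R) :
    Matrix (Fin (k - 1) × Fin n) (Fin (k - 1) × Fin n) R := fun p q =>
  if (p.1 : ℕ) + 2 = (q.1 : ℕ) then (if p.2 = q.2 then (1 : R) else 0)
  else if (p.1 : ℕ) = k - 2 then -(A (q.1 : ℕ)) p.2 q.2 else 0

variable {m n : ℕ} (A : ℕ → Matrix (Fin n) (Fin n) R) (x : Fin (m + 2) × Fin n → R)

lemma companionTop_mulVec_castSucc_castSucc (i : Fin m) :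
    (fun r => (companionTop (m + 3) n A *ᵥ x) (i.castSucc.castSucc, r)) =
      fun r => x (i.succ.succ, r) := by
  have hi : (i : ℕ) ≠ m + 1 := by omega
  have hj (j : Fin (m + 2)) : (i : ℕ) + 2 = j ↔ i.succ.succ = j := by simp [Fin.ext_iff]
  ext r
  simp [companionTop, Matrix.mulVec, dotProduct, Fintype.sum_prod_type, hi, hj]

lemma companionTop_mulVec_castSucc_last :
    (fun r => (companionTop (m + 3) n A *ᵥ x) ((Fin.last m).castSucc, r)) = 0 := by
  have hj (j : Fin (m + 2)) : m + 2 ≠ (j : ℕ) := j.isLt.ne'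
  ext r
  simp [companionTop, Matrix.mulVec, dotProduct, hj]

lemma companionTop_mulVec_last :
    (fun r => (companionTop (m + 3) n A *ᵥ x) (Fin.last (m + 1), r)) =
      -∑ j : Fin (m + 2), A j *ᵥ fun t => x (j, t) := by
  have hj (j : Fin (m + 2)) : m + 1 + 2 ≠ (j : ℕ) := by omega
  ext r
  simp [companionTop, Matrix.mulVec, dotProduct, Fintype.sum_prod_type, hj]

lemma qVecNorm_companionTop_mulVec_sq :
    qVecNorm (companionTop (m + 3) n A *ᵥ x) ^ 2 =
      ∑ i : Fin m, qVecNorm (fun r => x (i.succ.succ, r)) ^ 2 +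
        qVecNorm (∑ j : Fin (m + 2), A j *ᵥ fun t => x (j, t)) ^ 2 := by
  rw [qVecNorm_sq_prod (ι := Fin (m + 2)), Fin.sum_univ_castSucc, Fin.sum_univ_castSucc,
    companionTop_mulVec_castSucc_last, companionTop_mulVec_last, qVecNorm_neg]
  simp only [companionTop_mulVec_castSucc_castSucc]
  simp [qVecNorm]

end Companion

theorem specNorm_S_bound (k n : ℕ) (hk : 3 ≤ k)
    (A : ℕ → Matrix (Fin n) (Fin n) ℍ[ℝ]) :
    qSpecNorm (fun p q : Fin (k - 1) × Fin n =>
        if (p.1 : ℕ) + 2 = (q.1 : ℕ) then (if p.2 = q.2 then (1 : ℍ[ℝ]) else 0)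
        else if (p.1 : ℕ) = k - 2 then -(A (q.1 : ℕ)) p.2 q.2 else 0) ^ 2 ≤
      (1 / 2) * (1 + (∑ i ∈ Finset.range (k - 1), qSpecNorm (A i) ^ 2) +
        Real.sqrt ((1 + (∑ i ∈ Finset.range (k - 1), qSpecNorm (A i) ^ 2)) ^ 2 -
          4 * (qSpecNorm (A 0) ^ 2 + qSpecNorm (A 1) ^ 2))) := by
  obtain ⟨m, rfl⟩ : ∃ m, k = m + 3 := ⟨k - 3, by omega⟩
  show qSpecNorm (companionTop (m + 3) n A) ^ 2 ≤ topEig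
    (∑ i ∈ Finset.range (m + 2), qSpecNorm (A i) ^ 2) (qSpecNorm (A 0) ^ 2 + qSpecNorm (A 1) ^ 2)
  rw [← Fin.sum_univ_eq_sum_range]
  refine qSpecNorm_sq_le_of_forall (by unfold topEig; positivity)
    fun (x : Fin (m + 2) × Fin n → ℍ[ℝ]) => ?_
  calc qVecNorm (companionTop (m + 3) n A *ᵥ x) ^ 2
      = ∑ i : Fin m, qVecNorm (fun r => x (i.succ.succ, r)) ^ 2 +
          qVecNorm (∑ j : Fin (m + 2), A j *ᵥ fun t => x (j, t)) ^ 2 :=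
        qVecNorm_companionTop_mulVec_sq A x
    _ ≤ ∑ i : Fin m, qVecNorm (fun r => x (i.succ.succ, r)) ^ 2 +
          (∑ j : Fin (m + 2), qSpecNorm (A j) * qVecNorm (fun t => x (j, t))) ^ 2 := by
        gcongr
        · exact qVecNorm_nonneg _
        · exact qVecNorm_sum_mulVec_le _ _
    _ ≤ topEig (∑ j : Fin (m + 2), qSpecNorm (A j) ^ 2)
          (qSpecNorm (A (0 : Fin (m + 2))) ^ 2 + qSpecNorm (A (1 : Fin (m + 2))) ^ 2) *
          ∑ j : Fin (m + 2), qVecNorm (fun t => x (j, t)) ^ 2 :=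
        sum_sq_tail_add_sq_sum_mul_le (a := fun j => qSpecNorm (A j))
          (s := fun j => qVecNorm fun t => x (j, t)) (fun _ => qSpecNorm_nonneg _)
          (fun _ => qVecNorm_nonneg _)
    _ = _ := by rw [qVecNorm_sq_prod x, Fin.val_zero, Fin.val_one]
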